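/- Let y₀(x) = cos(x + π/2) + (2/π)·x and let h : ℝ → ℝ be continuously differentiable on [−π/2, π/2] with h(−π/2) = h(π/2) = 0. Then ∫_{−π/2}^{π/2} (((y₀ + h)′(x))² − 2·(y₀ + h)(x)·cos(x + π/2)) dx − ∫_{−π/2}^{π/2} ((y₀′(x))² − 2·y₀(x)·cos(x + π/2)) dx = ∫_{−π/2}^{π/2} (h′(x))² dx. -/

import Mathlib

open Real Set intervalIntegral

/-!
Expanding the square, `J(y₀ + h) - J(y₀) = ∫ h'² + 2 ∫ (y₀' h' - g h)`, and since `y₀'' = -g` the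
cross term is `2 ∫ (y₀' h)' = 2 [y₀' h]ₐᵇ`, which vanishes because `h` does at both endpoints.
-/

/-- The functional `J` of the paper, with load `g`; its Euler–Lagrange equation is `y'' = -g`. -/
noncomputable def poissonEnergy (g : ℝ → ℝ) (a b : ℝ) (y : ℝ → ℝ) : ℝ :=
  ∫ x in a..b, deriv y x ^ 2 - 2 * y x * g x

theorem DifferentiableOn.hasDerivAt_derivWithin_Icc {h : ℝ → ℝ} {a b x : ℝ}
    (hh : DifferentiableOn ℝ h (Icc a b)) (hx : x ∈ Ioo a b) :
    HasDerivAt h (derivWithin h (Icc a b) x) x := by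
  have hmem : Icc a b ∈ nhds x := Icc_mem_nhds hx.1 hx.2
  rw [derivWithin_of_mem_nhds hmem]
  exact ((hh x (Ioo_subset_Icc_self hx)).differentiableAt hmem).hasDerivAt

theorem poissonEnergy_add_sub_poissonEnergy {g y₀ y₀' h : ℝ → ℝ} {a b : ℝ} (hab : a < b)
    (hy₀ : ∀ x ∈ Icc a b, HasDerivAt y₀ (y₀' x) x)
    (hy₀' : ∀ x ∈ Icc a b, HasDerivAt y₀' (-g x) x) (hg : ContinuousOn g (Icc a b))
    (hh : ContDiffOn ℝ 1 h (Icc a b)) (ha : h a = 0) (hb : h b = 0) :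
    poissonEnergy g a b (y₀ + h) - poissonEnergy g a b y₀ = ∫ x in a..b, deriv h x ^ 2 := by
  set φ := derivWithin h (Icc a b)
  have hφ (x) (hx : x ∈ Ioo a b) : HasDerivAt h (φ x) x :=
    (hh.differentiableOn one_ne_zero).hasDerivAt_derivWithin_Icc hx
  have hφc : ContinuousOn φ (Icc a b) :=
    hh.continuousOn_derivWithin (uniqueDiffOn_Icc hab) le_rfl
  have hy₀c : ContinuousOn y₀ (Icc a b) := fun x hx => (hy₀ x hx).continuousAt.continuousWithinAt
  have hy₀'c : ContinuousOn y₀' (Icc a b) :=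
    fun x hx => (hy₀' x hx).continuousAt.continuousWithinAt
  have hhc : ContinuousOn h (Icc a b) := hh.continuousOn
  have parts : ∫ x in a..b, -g x * h x + y₀' x * φ x = 0 := by
    rw [← uIcc_of_le hab.le] at hy₀'c hhc hφc hg
    rw [integral_deriv_mul_eq_sub_of_hasDerivAt hy₀'c hhc
      (fun x hx => hy₀' x (Ioo_subset_Icc_self (by simpa [hab.le] using hx)))
      (fun x hx => hφ x (by simpa [hab.le] using hx))
      hg.neg.intervalIntegrable hφc.intervalIntegrable, ha, hb]
    ring
  have integrable {f : ℝ → ℝ} (hf : ContinuousOn f (Icc a b)) :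
      IntervalIntegrable f MeasureTheory.volume a b :=
    hf.intervalIntegrable_of_Icc hab.le
  calc poissonEnergy g a b (y₀ + h) - poissonEnergy g a b y₀
      = ∫ x in a..b, ((y₀' x + φ x) ^ 2 - 2 * (y₀ x + h x) * g x) -
          (y₀' x ^ 2 - 2 * y₀ x * g x) := by
        rw [integral_sub (integrable (by fun_prop)) (integrable (by fun_prop))]
        congr 1 <;> refine integral_congr_Ioo_of_le hab.le fun x hx => ?_
        · simp only [((hy₀ x (Ioo_subset_Icc_self hx)).add (hφ x hx)).deriv, Pi.add_apply]
        · simp only [(hy₀ x (Ioo_subset_Icc_self hx)).deriv]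
    _ = ∫ x in a..b, φ x ^ 2 + 2 * (-g x * h x + y₀' x * φ x) :=
        integral_congr fun x _ => by ring
    _ = ∫ x in a..b, φ x ^ 2 := by
        rw [integral_add (integrable (by fun_prop)) (integrable (by fun_prop)),
          integral_const_mul, parts, mul_zero, add_zero]
    _ = ∫ x in a..b, deriv h x ^ 2 :=
        integral_congr_Ioo_of_le hab.le fun x hx => by simp only [(hφ x hx).deriv]

/-- Exact second-variation identity for Example 4: perturbing the
Euler–Lagrange solution `y₀` by an admissible `h` changes the functional by
exactly `∫ h′²`. -/
theorem example4_second_variation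
    (h : ℝ → ℝ) (hh : ContDiffOn ℝ 1 h (Set.Icc (-(π / 2)) (π / 2)))
    (hb1 : h (-(π / 2)) = 0) (hb2 : h (π / 2) = 0) :
    (∫ x in (-(π / 2))..(π / 2),
        ((deriv ((fun x : ℝ => Real.cos (x + π / 2) + (2 / π) * x) + h) x) ^ 2 -
          2 * ((fun x : ℝ => Real.cos (x + π / 2) + (2 / π) * x) + h) x *
            Real.cos (x + π / 2))) -
      (∫ x in (-(π / 2))..(π / 2),
        ((deriv (fun x : ℝ => Real.cos (x + π / 2) + (2 / π) * x) x) ^ 2 -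
          2 * (fun x : ℝ => Real.cos (x + π / 2) + (2 / π) * x) x *
            Real.cos (x + π / 2))) =
      ∫ x in (-(π / 2))..(π / 2), (deriv h x) ^ 2 := by
  have hy₀ (x : ℝ) : HasDerivAt (fun x => cos (x + π / 2) + 2 / π * x)
      (-sin (x + π / 2) + 2 / π) x := by
    simpa using ((hasDerivAt_id x).add_const (π / 2)).cos.fun_add
      ((hasDerivAt_id x).const_mul (2 / π))
  have hy₀' (x : ℝ) : HasDerivAt (fun x => -sin (x + π / 2) + 2 / π) (-cos (x + π / 2)) x := by
    simpa using ((hasDerivAt_id x).add_const (π / 2)).sin.neg.add_const (2 / π)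
  exact poissonEnergy_add_sub_poissonEnergy (by linarith [pi_pos]) (fun x _ => hy₀ x)
    (fun x _ => hy₀' x) (by fun_prop) hh hb1 hb2
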